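/- Compatibility of hyper normalisation with the copower comultiplication: let δ_X : Fin n × X → Fin n × (Fin n × X) be the map (i,x) ↦ (i,(i,x)), and for f : X → D(Y) let n∗f : Fin n × X → D(Fin n × Y) be (i,x) ↦ Σ_y f(x)(y)·η(i,y). Then for every ω ∈ D(Fin n × A): (n∗N_A)_*( N_{Fin n × A}( D(δ_A)(ω) ) ) = D(δ_{D(A)})( N_A(ω) ), where N_A : D(Fin n × A) → D(Fin n × D(A)) is hyper normalisation over base type A and N_{Fin n × A} : D(Fin n × (Fin n × A)) → D(Fin n × D(Fin n × A)) is hyper normalisation over base type Fin n × A. -/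

import Mathlib

/-!
The comultiplication `δ` acts fibre by fibre, and hyper normalisation is natural for such maps:
`N(D(δ)ω)` is `N(ω)` with each `ω_i` pushed into the `i`-th summand. Hyper normalising a
distribution concentrated on summand `i` gives `η(i, -)` of its `i`-th component, so the
Kleisli extension collapses to `D(δ)(N ω)`.
-/

open scoped ENNReal

noncomputable section

namespace HyperNorm

variable {A B : Type*} {n m : ℕ}

/-- `ω[i] = Σ_a ω(i,a)`. -/
def fmass (ω : PMF (Fin n × A)) (i : Fin n) : ℝ≥0∞ := ∑' a, ω (i, a)

lemma tsum_fmass (ω : PMF (Fin n × A)) : ∑' i, fmass ω i = 1 := by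
  simp only [fmass]
  rw [← ENNReal.tsum_prod']
  exact ω.tsum_coe

lemma fmass_ne_top (ω : PMF (Fin n × A)) (i : Fin n) : fmass ω i ≠ ⊤ := by
  apply ne_top_of_le_ne_top ENNReal.one_ne_top
  rw [← tsum_fmass ω]
  exact ENNReal.le_tsum i

/-- The first marginal `i ↦ ω[i]` as a distribution. -/
def fstM (ω : PMF (Fin n × A)) : PMF (Fin n) :=
  ⟨fun i => fmass ω i, ENNReal.summable.hasSum_iff.mpr (tsum_fmass ω)⟩

/-- The normalised `i`-th component `ω_i(a) = ω(i,a)/ω[i]` (junk value if `ω[i] = 0`,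
which never contributes to `hnorm` below since it is weighted by `ω[i] = 0`). -/
def ncond (ω : PMF (Fin n × A)) (i : Fin n) : PMF A :=
  if h : fmass ω i ≠ 0 then
    ⟨fun a => ω (i, a) / fmass ω i,
      ENNReal.summable.hasSum_iff.mpr (by
        simp only [div_eq_mul_inv]
        rw [ENNReal.tsum_mul_right, ← div_eq_mul_inv]
        exact ENNReal.div_self h (fmass_ne_top ω i))⟩
  else PMF.pure (ω.support_nonempty.some.2)

/-- Hyper normalisation `N(ω) = Σ_{i with ω[i] ≠ 0} ω[i]·η(i, ω_i)`. -/
def hnorm (ω : PMF (Fin n × A)) : PMF (Fin n × PMF A) :=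
  (fstM ω).bind fun i => PMF.pure (i, ncond ω i)

/-- Graph map `gr(f)(x)(y,x') = f(x)(y) if x' = x, else 0`. -/
def gr {X Y : Type*} (f : X → PMF Y) : X → PMF (Y × X) :=
  fun x => (f x).map fun y => (y, x)

lemma bind_congr_of_ne_zero {α β : Type*} (p : PMF α) {f g : α → PMF β}
    (h : ∀ a, p a ≠ 0 → f a = g a) : p.bind f = p.bind g := by
  ext b
  refine tsum_congr fun a => ?_
  by_cases ha : p a = 0
  · simp [ha]
  · rw [h a ha]

lemma fstM_eq_map_fst (ω : PMF (Fin n × A)) : fstM ω = ω.map Prod.fst := by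
  ext i
  rw [PMF.map_apply, ENNReal.tsum_prod', tsum_eq_single i]
  · simp only [if_true]
    rfl
  · intro j hj
    simp [Ne.symm hj]

lemma ncond_apply (ω : PMF (Fin n × A)) {i : Fin n} (h : fmass ω i ≠ 0) (a : A) :
    ncond ω i a = ω (i, a) / fmass ω i := by
  erw [ncond, dif_pos h]
  rfl

section Fiberwise

variable (g : Fin n → A → B)

open scoped Classical in
lemma map_fiberwise_apply (ω : PMF (Fin n × A)) (i : Fin n) (b : B) :
    ω.map (fun p => (p.1, g p.1 p.2)) (i, b) = ∑' a, if b = g i a then ω (i, a) else 0 := by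
  rw [PMF.map_apply, ENNReal.tsum_prod', tsum_eq_single i]
  · simp
  · intro j hj
    simp [Ne.symm hj]

lemma fmass_map_fiberwise (ω : PMF (Fin n × A)) (i : Fin n) :
    fmass (ω.map fun p => (p.1, g p.1 p.2)) i = fmass ω i := by
  change fstM _ i = fstM ω i
  rw [fstM_eq_map_fst, fstM_eq_map_fst, PMF.map_comp]
  rfl

lemma ncond_map_fiberwise (ω : PMF (Fin n × A)) {i : Fin n} (h : fmass ω i ≠ 0) :
    ncond (ω.map fun p => (p.1, g p.1 p.2)) i = (ncond ω i).map (g i) := by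
  have h' : fmass (ω.map fun p => (p.1, g p.1 p.2)) i ≠ 0 := by
    rwa [fmass_map_fiberwise]
  ext b
  rw [ncond_apply _ h', fmass_map_fiberwise, map_fiberwise_apply, PMF.map_apply,
    div_eq_mul_inv, ← ENNReal.tsum_mul_right]
  refine tsum_congr fun a => ?_
  split_ifs <;> simp [ncond_apply ω h, div_eq_mul_inv]

theorem hnorm_map_fiberwise (ω : PMF (Fin n × A)) :
    hnorm (ω.map fun p => (p.1, g p.1 p.2)) =
      (hnorm ω).map fun q => (q.1, q.2.map (g q.1)) := by
  have hfst : fstM (ω.map fun p => (p.1, g p.1 p.2)) = fstM ω :=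
    PMF.ext (fmass_map_fiberwise g ω)
  rw [hnorm, hfst, hnorm, PMF.map_bind]
  refine bind_congr_of_ne_zero _ fun i hi => ?_
  rw [PMF.pure_map, ncond_map_fiberwise g ω hi]

end Fiberwise

lemma hnorm_map_mk (ν : PMF A) (i : Fin n) :
    hnorm (ν.map fun a => (i, a)) = PMF.pure (i, ν) := by
  have hfst : fstM (ν.map fun a => (i, a)) = PMF.pure i := by
    rw [fstM_eq_map_fst, PMF.map_comp]
    exact PMF.map_const ν i
  have hmass : fmass (ν.map fun a => (i, a)) i ≠ 0 := by
    change fstM _ i ≠ 0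
    simp [hfst]
  have hcond : ncond (ν.map fun a => (i, a)) i = ν := by
    ext a
    rw [ncond_apply _ hmass, PMF.map_apply,
      tsum_eq_single a fun b hb => if_neg fun hab => hb (Prod.mk.inj hab).2.symm]
    change _ / fstM _ i = _
    simp [hfst]
  rw [hnorm, hfst, PMF.pure_bind, hcond]

/-- compatibility of hyper normalisation with the copower
comultiplication `δ(i,x) = (i,(i,x))`:
`(n∗N_A)_*(N_{Fin n × A}(D(δ_A)(ω))) = D(δ_{D(A)})(N_A(ω))`. -/
theorem hnorm_comult (ω : PMF (Fin n × A)) :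
    (hnorm (ω.map fun p : Fin n × A => (p.1, p))).bind
        (fun q : Fin n × PMF (Fin n × A) => (hnorm q.2).map fun y => (q.1, y)) =
      (hnorm ω).map fun p : Fin n × PMF A => (p.1, p) := by
  have hnat := hnorm_map_fiberwise (fun i a => (i, a)) ω
  simp only [Prod.mk.eta] at hnat
  rw [hnat, PMF.bind_map, ← PMF.bind_pure_comp]
  congr 1
  funext q
  simp [hnorm_map_mk, PMF.pure_map]

end HyperNorm
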